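/- arXiv:2204.02616 — 9 statements merged into one kernel-verified Lean document; each statement's English description precedes it below -/
import Mathlib

section
/- Every combinatory logic system is confluent: if a term t rewrites (via the reflexive-transitive closure of the context closure of the rules) to both s1 and s2, then there exists a term t' such that s1 and s2 both rewrite to t'. -/
/-! Tait–Martin-Löf: parallel reduction `Par` (contract any set of redexes simultaneously) lies
between one-step and many-step reduction, so it suffices that `Par` has the diamond property.
The rules are orthogonal: a left-hand side `C x_0 ⋯ x_{n-1}` is linear, its head determines the
rule, and a proper prefix of a redex is not a redex. Hence two parallel reductions of a redex
are both given by parallel reductions of its arguments, followed or not by the contraction, and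
they are joined by joining the arguments (induction on the size of the term) and contracting. -/

/-- Terms over an alphabet `G` of basic combinators: variables, basic combinators, applications. -/
inductive CTerm (G : Type*) : Type _
  | var : ℕ → CTerm G
  | cst : G → CTerm G
  | app : CTerm G → CTerm G → CTerm G

/-- A term contains no basic combinator. -/
def CTerm.noCst {G : Type*} : CTerm G → Prop
  | .var _ => True
  | .cst _ => False
  | .app a b => a.noCst ∧ b.noCst

/-- All variables of the term have index `< n`. -/
def CTerm.varsLT {G : Type*} (n : ℕ) : CTerm G → Prop
  | .var i => i < n
  | .cst _ => True
  | .app a b => a.varsLT n ∧ b.varsLT n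

/-- Simultaneous substitution of terms for the variables. -/
def CTerm.subst {G : Type*} (σ : ℕ → CTerm G) : CTerm G → CTerm G
  | .var i => σ i
  | .cst c => .cst c
  | .app a b => .app (a.subst σ) (b.subst σ)

/-- The left-hand side `C s_0 ⋯ s_{n-1}` of a rule instance. -/
def CTerm.spine {G : Type*} (C : G) (n : ℕ) (σ : ℕ → CTerm G) : CTerm G :=
  (List.range n).foldl (fun acc i => .app acc (σ i)) (.cst C)

/-- A combinatory logic system: each basic combinator `C` has exactly one rule
`C x_0 ⋯ x_{n-1} → t_C` with `n ≥ 1` and `t_C` a term with no basic combinator and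
all variables among `x_0, …, x_{n-1}`. -/
structure CLS (G : Type*) where
  arity : G → ℕ
  arity_pos : ∀ C, 1 ≤ arity C
  rhs : G → CTerm G
  rhs_noCst : ∀ C, (rhs C).noCst
  rhs_vars : ∀ C, (rhs C).varsLT (arity C)

/-- Context closure of the rules of a CLS. -/
inductive CLS.Step {G : Type*} (S : CLS G) : CTerm G → CTerm G → Prop
  | rule (C : G) (σ : ℕ → CTerm G) :
      CLS.Step S (CTerm.spine C (S.arity C) σ) ((S.rhs C).subst σ)
  | left {t t' : CTerm G} (u : CTerm G) : CLS.Step S t t' → CLS.Step S (.app t u) (.app t' u)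
  | right (u : CTerm G) {t t' : CTerm G} : CLS.Step S t t' → CLS.Step S (.app u t) (.app u t')

namespace CTerm

variable {G : Type*}

theorem spine_succ (C : G) (n : ℕ) (σ : ℕ → CTerm G) :
    spine C (n + 1) σ = .app (spine C n σ) (σ n) := by
  simp [spine, List.range_succ]

theorem spine_congr (C : G) {n : ℕ} {σ τ : ℕ → CTerm G} (h : ∀ i < n, σ i = τ i) :
    spine C n σ = spine C n τ := by
  induction n with
  | zero => rfl
  | succ n ih => rw [spine_succ, spine_succ, ih fun i hi => h i (by omega), h n n.lt_succ_self]

theorem spine_succ_update (C : G) (n : ℕ) (σ : ℕ → CTerm G) (u : CTerm G) :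
    spine C (n + 1) (Function.update σ n u) = .app (spine C n σ) u := by
  rw [spine_succ, Function.update_self,
    spine_congr C fun i hi => Function.update_of_ne (Nat.ne_of_lt hi) _ _]

theorem spine_inj {C D : G} {n m : ℕ} {σ τ : ℕ → CTerm G}
    (h : spine C n σ = spine D m τ) :
    C = D ∧ n = m ∧ ∀ i < n, σ i = τ i := by
  induction n generalizing m with
  | zero =>
    cases m with
    | zero => exact ⟨cst.inj h, rfl, by omega⟩
    | succ m => rw [spine_succ] at h; cases h
  | succ n ih =>
    cases m with
    | zero => rw [spine_succ] at h; cases h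
    | succ m =>
      rw [spine_succ, spine_succ] at h
      obtain ⟨hinit, hlast⟩ := app.inj h
      obtain ⟨rfl, rfl, hσ⟩ := ih hinit
      refine ⟨rfl, rfl, fun i hi => ?_⟩
      rcases Nat.lt_succ_iff_lt_or_eq.mp hi with hi | rfl
      exacts [hσ i hi, hlast]

theorem sizeOf_lt_sizeOf_spine (C : G) {n : ℕ} (σ : ℕ → CTerm G) {i : ℕ} (hi : i < n) :
    sizeOf (σ i) < sizeOf (spine C n σ) := by
  induction n with
  | zero => omega
  | succ n ih =>
    rw [spine_succ, app.sizeOf_spec]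
    rcases Nat.lt_succ_iff_lt_or_eq.mp hi with hi | rfl
    · have := ih hi; omega
    · omega

instance : Inhabited (CTerm G) := ⟨.var 0⟩

end CTerm

namespace CLS

open CTerm Relation

variable {G : Type*} (S : CLS G)

theorem exists_spine_arity_eq_app (C : G) (σ : ℕ → CTerm G) :
    ∃ x y, spine C (S.arity C) σ = .app x y := by
  obtain ⟨n, hn⟩ := Nat.exists_eq_add_of_le' (S.arity_pos C)
  exact ⟨_, _, hn ▸ spine_succ C n σ⟩

def IsRedex (a : CTerm G) : Prop := ∃ C σ, a = spine C (S.arity C) σ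

inductive Par : CTerm G → CTerm G → Prop
  | var (i : ℕ) : Par (.var i) (.var i)
  | cst (c : G) : Par (.cst c) (.cst c)
  | app {a a' b b' : CTerm G} : Par a a' → Par b b' → Par (.app a b) (.app a' b')
  | rule (C : G) (σ σ' : ℕ → CTerm G) (h : ∀ i < S.arity C, Par (σ i) (σ' i)) :
      Par (spine C (S.arity C) σ) ((S.rhs C).subst σ')

variable {S}

theorem Par.refl : ∀ t : CTerm G, S.Par t t
  | .var i => .var i
  | .cst c => .cst c
  | .app a b => .app (Par.refl a) (Par.refl b)

theorem Par.of_step {a b : CTerm G} (h : S.Step a b) : S.Par a b := by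
  induction h with
  | rule C σ => exact .rule C σ σ fun i _ => .refl _
  | left u _ ih => exact .app ih (.refl u)
  | right u _ ih => exact .app (.refl u) ih

theorem Par.subst {n : ℕ} {σ τ : ℕ → CTerm G} (h : ∀ i < n, S.Par (σ i) (τ i)) :
    ∀ {t : CTerm G}, t.varsLT n → S.Par (t.subst σ) (t.subst τ)
  | .var i, hv => h i hv
  | .cst c, _ => .cst c
  | .app _ _, hv => .app (Par.subst h hv.1) (Par.subst h hv.2)

theorem Step.reflTransGen_app {a a' b b' : CTerm G} (ha : ReflTransGen S.Step a a')
    (hb : ReflTransGen S.Step b b') : ReflTransGen S.Step (.app a b) (.app a' b') :=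
  (ha.lift (CTerm.app · b) fun _ _ => Step.left b).trans
    (hb.lift (CTerm.app a') fun _ _ => Step.right a')

theorem Step.reflTransGen_spine (C : G) {n : ℕ} {σ τ : ℕ → CTerm G}
    (h : ∀ i < n, ReflTransGen S.Step (σ i) (τ i)) :
    ReflTransGen S.Step (spine C n σ) (spine C n τ) := by
  induction n with
  | zero => exact .refl
  | succ n ih =>
    rw [spine_succ, spine_succ]
    exact Step.reflTransGen_app (ih fun i hi => h i (by omega)) (h n n.lt_succ_self)

theorem Par.reflTransGen_step {a b : CTerm G} (h : S.Par a b) : ReflTransGen S.Step a b := by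
  induction h with
  | var | cst => exact .refl
  | app _ _ iha ihb => exact Step.reflTransGen_app iha ihb
  | rule C _ σ' _ ih => exact (Step.reflTransGen_spine C ih).tail (.rule C σ')

theorem reflTransGen_par_eq : ReflTransGen S.Par = ReflTransGen S.Step :=
  le_antisymm (reflTransGen_closed fun _ _ => Par.reflTransGen_step)
    (ReflTransGen.mono fun _ _ => Par.of_step)

theorem Par.eq_of_forall_ne_app {a u : CTerm G} (h : S.Par a u) (ha : ∀ x y, a ≠ .app x y) :
    u = a := by
  cases h with
  | var | cst => rfl
  | app => exact absurd rfl (ha _ _)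
  | rule C σ =>
    obtain ⟨x, y, hxy⟩ := S.exists_spine_arity_eq_app C σ
    exact absurd hxy (ha x y)

theorem Par.app_inv {x y u : CTerm G} (h : S.Par (.app x y) u) :
    (∃ x' y', S.Par x x' ∧ S.Par y y' ∧ u = .app x' y') ∨
    ∃ C σ σ', CTerm.app x y = spine C (S.arity C) σ ∧
      (∀ i < S.arity C, S.Par (σ i) (σ' i)) ∧ u = (S.rhs C).subst σ' := by
  generalize hxy : CTerm.app x y = a at h
  cases h with
  | app hx hy => cases hxy; exact .inl ⟨_, _, hx, hy, rfl⟩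
  | rule C σ σ' hσ => exact .inr ⟨C, σ, σ', rfl, hσ, rfl⟩
  | var | cst => cases hxy

theorem Par.spine_inv {C : G} {m : ℕ} (hm : m ≤ S.arity C) {σ : ℕ → CTerm G} {u : CTerm G}
    (h : S.Par (spine C m σ) u) :
    ∃ σ', (∀ i < m, S.Par (σ i) (σ' i)) ∧
      (u = spine C m σ' ∨ m = S.arity C ∧ u = (S.rhs C).subst σ') := by
  induction m generalizing u with
  | zero => exact ⟨σ, by omega, .inl (h.eq_of_forall_ne_app fun _ _ => by simp [spine])⟩
  | succ m ih =>
    rw [spine_succ] at h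
    rcases h.app_inv with ⟨x', y', hx, hy, rfl⟩ | ⟨D, τ, τ', he, hτ, rfl⟩
    · obtain ⟨σ', hσ', rfl | ⟨rfl, -⟩⟩ := ih (by omega) hx
      · refine ⟨Function.update σ' m y', fun i hi => ?_,
          .inl (spine_succ_update C m σ' y').symm⟩
        rcases Nat.lt_succ_iff_lt_or_eq.mp hi with hi | rfl
        · simpa [Function.update_of_ne (Nat.ne_of_lt hi)] using hσ' i hi
        · simpa using hy
      · omega
    · obtain ⟨rfl, hma, hστ⟩ := spine_inj ((spine_succ C m σ).trans he)
      exact ⟨τ', fun i hi => hστ i hi ▸ hτ i (hma ▸ hi), .inr ⟨hma, rfl⟩⟩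

theorem Par.to_contractum {C : G} {σ τ : ℕ → CTerm G} {u : CTerm G}
    (h : ∀ i < S.arity C, S.Par (σ i) (τ i))
    (hu : u = spine C (S.arity C) σ ∨ u = (S.rhs C).subst σ) :
    S.Par u ((S.rhs C).subst τ) := by
  rcases hu with rfl | rfl
  exacts [.rule C σ τ h, .subst h (S.rhs_vars C)]

theorem Par.app_inv_of_not_isRedex {x y u : CTerm G} (h : S.Par (.app x y) u)
    (hxy : ¬ S.IsRedex (.app x y)) : ∃ x' y', S.Par x x' ∧ S.Par y y' ∧ u = .app x' y' :=
  h.app_inv.resolve_right fun ⟨C, σ, _, he, _⟩ => hxy ⟨C, σ, he⟩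

theorem Par.diamond {a b c : CTerm G} (hab : S.Par a b) (hac : S.Par a c) :
    ∃ d, S.Par b d ∧ S.Par c d := by
  by_cases ha : S.IsRedex a
  · obtain ⟨C, σ, rfl⟩ := ha
    obtain ⟨σb, hσb, hb⟩ := hab.spine_inv le_rfl
    obtain ⟨σc, hσc, hc⟩ := hac.spine_inv le_rfl
    have hargs : ∀ i < S.arity C, ∃ d, S.Par (σb i) d ∧ S.Par (σc i) d := fun i hi =>
      have := sizeOf_lt_sizeOf_spine C σ hi
      Par.diamond (hσb i hi) (hσc i hi)
    choose! ρ hρb hρc using hargs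
    exact ⟨_, .to_contractum hρb (hb.imp_right And.right),
      .to_contractum hρc (hc.imp_right And.right)⟩
  · cases a with
    | app x y =>
      obtain ⟨xb, yb, hxb, hyb, rfl⟩ := hab.app_inv_of_not_isRedex ha
      obtain ⟨xc, yc, hxc, hyc, rfl⟩ := hac.app_inv_of_not_isRedex ha
      obtain ⟨x', hx'b, hx'c⟩ := Par.diamond hxb hxc
      obtain ⟨y', hy'b, hy'c⟩ := Par.diamond hyb hyc
      exact ⟨.app x' y', .app hx'b hy'b, .app hx'c hy'c⟩
    | _ =>
      rw [hab.eq_of_forall_ne_app fun _ _ => by simp, hac.eq_of_forall_ne_app fun _ _ => by simp]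
      exact ⟨_, .refl _, .refl _⟩
termination_by sizeOf a

end CLS

theorem cls_confluent_general {G : Type*} (S : CLS G) (t s₁ s₂ : CTerm G)
    (h₁ : Relation.ReflTransGen S.Step t s₁) (h₂ : Relation.ReflTransGen S.Step t s₂) :
    ∃ t' : CTerm G, Relation.ReflTransGen S.Step s₁ t' ∧ Relation.ReflTransGen S.Step s₂ t' := by
  rw [← S.reflTransGen_par_eq] at h₁ h₂ ⊢
  exact Relation.church_rosser (fun _ _ _ hab hac =>
    (hab.diamond hac).imp fun _ ⟨hb, hc⟩ => ⟨.single hb, .single hc⟩) h₁ h₂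

/-- Every combinatory logic system is confluent. -/
theorem cls_confluent {G : Type*} [Fintype G] (S : CLS G) (t s₁ s₂ : CTerm G)
    (h₁ : Relation.ReflTransGen S.Step t s₁) (h₂ : Relation.ReflTransGen S.Step t s₂) :
    ∃ t' : CTerm G, Relation.ReflTransGen S.Step s₁ t' ∧ Relation.ReflTransGen S.Step s₂ t' :=
  cls_confluent_general S t s₁ s₂ h₁ h₂
end

section
/- In the Mockingbird combinatory logic system, every equivalence class of terms under the reflexive-symmetric-transitive closure of the rewrite relation is finite. -/
inductive MTerm : Type
  | M : MTerm
  | var : ℕ → MTerm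
  | app : MTerm → MTerm → MTerm

/-- One-step rewrite of the Mockingbird system: replace a subterm `M s` by `s s`. -/
inductive MStep : MTerm → MTerm → Prop
  | mock (s : MTerm) : MStep (.app .M s) (.app s s)
  | left {t t' : MTerm} (u : MTerm) : MStep t t' → MStep (.app t u) (.app t' u)
  | right (u : MTerm) {t t' : MTerm} : MStep t t' → MStep (.app u t) (.app u t')

/-- Rewrite order: reflexive-transitive closure of `MStep`. -/
def MLe : MTerm → MTerm → Prop := Relation.ReflTransGen MStep

/-- A term is a combinator when it contains no variable. -/
def NoVar : MTerm → Prop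
  | .M => True
  | .var _ => False
  | .app a b => NoVar a ∧ NoVar b

/-- Subterm (factor) relation. -/
inductive MSub : MTerm → MTerm → Prop
  | refl (t : MTerm) : MSub t t
  | left {s a : MTerm} (b : MTerm) : MSub s a → MSub s (.app a b)
  | right (a : MTerm) {s b : MTerm} : MSub s b → MSub s (.app a b)

/-- Height: maximal number of internal nodes on a root-to-leaf path. -/
def ht : MTerm → ℕ
  | .M => 0
  | .var _ => 0
  | .app a b => max (ht a) (ht b) + 1

/-- Degree: number of application (internal) nodes. -/
def deg : MTerm → ℕ
  | .M => 0
  | .var _ => 0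
  | .app a b => deg a + deg b + 1


/-!
A rewrite `M s ↦ s s` preserves the height of a term (both sides have height `ht s + 1`) and
its set of variables, so every term equivalent to `t` has height at most `ht t` and variables
among those of `t`; there are only finitely many such terms.
-/

theorem Relation.EqvGen.eq_of_rel_imp_eq {α β : Type*} {r : α → α → Prop} {f : α → β}
    (hf : ∀ a b, r a b → f a = f b) {a b : α} (h : Relation.EqvGen r a b) : f a = f b :=
  congrArg (Quot.lift f hf) (Quot.eqvGen_sound h)

namespace MTerm

def vars : MTerm → Finset ℕ
  | .M => ∅
  | .var n => {n}
  | .app a b => vars a ∪ vars b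

theorem finite_setOf_ht_le_vars_subset (V : Finset ℕ) (n : ℕ) :
    {u : MTerm | ht u ≤ n ∧ u.vars ⊆ V}.Finite := by
  induction n with
  | zero =>
    refine ((Set.finite_singleton M).union (V.finite_toSet.image var)).subset ?_
    rintro (_ | k | ⟨a, b⟩) ⟨hu, hV⟩
    · exact Or.inl rfl
    · exact Or.inr ⟨k, hV (Finset.mem_singleton_self k), rfl⟩
    · simp [ht] at hu
  | succ n ih =>
    refine (ih.union (ih.image2 app ih)).subset ?_
    rintro (_ | k | ⟨a, b⟩) ⟨hu, hV⟩
    · exact Or.inl ⟨Nat.zero_le n, hV⟩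
    · exact Or.inl ⟨Nat.zero_le n, hV⟩
    · simp only [ht, Nat.add_le_add_iff_right, max_le_iff] at hu
      simp only [vars, Finset.union_subset_iff] at hV
      exact Or.inr ⟨a, ⟨hu.1, hV.1⟩, b, ⟨hu.2, hV.2⟩, rfl⟩

end MTerm

namespace MStep

theorem ht_eq {t u : MTerm} (h : MStep t u) : ht t = ht u := by
  induction h with
  | mock s => simp [ht]
  | left _ _ ih => simp [ht, ih]
  | right _ _ ih => simp [ht, ih]

theorem vars_eq {t u : MTerm} (h : MStep t u) : t.vars = u.vars := by
  induction h with
  | mock s => simp [MTerm.vars]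
  | left _ _ ih => simp [MTerm.vars, ih]
  | right _ _ ih => simp [MTerm.vars, ih]

end MStep

/-- Every equivalence class under the reflexive-symmetric-transitive closure of the
Mockingbird rewrite relation is finite. -/
theorem mockingbird_locally_finite (t : MTerm) :
    {u : MTerm | Relation.EqvGen MStep t u}.Finite := by
  refine (MTerm.finite_setOf_ht_le_vars_subset t.vars (ht t)).subset fun u hu => ?_
  have hht : ht t = ht u := hu.eq_of_rel_imp_eq fun _ _ h => h.ht_eq
  have hvars : t.vars = u.vars := hu.eq_of_rel_imp_eq fun _ _ h => h.vars_eq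
  exact ⟨hht.ge, hvars.ge⟩
end

section
/- In the Mockingbird combinatory logic system, the reflexive-transitive closure of the one-step rewrite relation is antisymmetric, i.e., it is a partial order on terms over {M}. -/
/-!
Count the nodes of a term that are not `M` leaves. Rewriting `M s` to `s s` adds the weight of `s`
to this count, and `s` has weight zero only when `s = M`, where the step is the loop `M M ↦ M M`.
So every rewrite step is a loop or strictly increases the weight, and two terms that rewrite into
each other must coincide.
-/

theorem Relation.ReflTransGen.eq_or_lt_of_step {α β : Type*} [Preorder β] {r : α → α → Prop}
    {f : α → β} (hr : ∀ a b, r a b → a = b ∨ f a < f b) {a b : α} (h : ReflTransGen r a b) :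
    a = b ∨ f a < f b := by
  induction h with
  | refl => exact .inl rfl
  | @tail b c _ hbc ih =>
    rcases ih with rfl | hab
    · exact hr _ _ hbc
    · rcases hr _ _ hbc with rfl | hbc
      · exact .inr hab
      · exact .inr (hab.trans hbc)

namespace MTerm

def weight : MTerm → ℕ
  | .M => 0
  | .var _ => 1
  | .app a b => weight a + weight b + 1

theorem weight_eq_zero_iff {t : MTerm} : weight t = 0 ↔ t = .M := by
  cases t <;> simp [weight]

end MTerm

open MTerm

theorem MStep.eq_or_weight_lt {t t' : MTerm} (h : MStep t t') : t = t' ∨ weight t < weight t' := by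
  induction h with
  | mock s =>
    by_cases hs : s = .M
    · subst hs
      exact .inl rfl
    · have hpos : weight s ≠ 0 := weight_eq_zero_iff.not.mpr hs
      exact .inr (by simp only [weight]; omega)
  | left u _ ih =>
    rcases ih with rfl | hlt
    · exact .inl rfl
    · exact .inr (by simp only [weight]; omega)
  | right u _ ih =>
    rcases ih with rfl | hlt
    · exact .inl rfl
    · exact .inr (by simp only [weight]; omega)

theorem MLe.eq_or_weight_lt {t t' : MTerm} (h : MLe t t') : t = t' ∨ weight t < weight t' :=
  Relation.ReflTransGen.eq_or_lt_of_step (fun _ _ ↦ MStep.eq_or_weight_lt) h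

/-- The Mockingbird rewrite order is antisymmetric, hence a partial order. -/
theorem mockingbird_poset (t t' : MTerm) (h : MLe t t') (h' : MLe t' t) : t = t' := by
  rcases h.eq_or_weight_lt with rfl | hlt
  · rfl
  rcases h'.eq_or_weight_lt with rfl | hlt'
  · rfl
  exact (lt_asymm hlt hlt').elim
end

section
/- A combinator over {M} is a minimal element of the rewrite order (is not the result of any one-step rewrite from a different term) if and only if it avoids the pattern (x_1 x_2)(x_1 x_2), i.e., it has no subterm of the form (u v)(u v). -/
def MTerm.IsMinimal (t : MTerm) : Prop := ∀ t', NoVar t' → MStep t' t → t' = t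

theorem MSub.noVar {s t : MTerm} (h : MSub s t) (ht : NoVar t) : NoVar s := by
  induction h with
  | refl => exact ht
  | left _ _ ih => exact ih ht.1
  | right _ _ ih => exact ih ht.2

theorem MSub.isMinimal {s t : MTerm} (h : MSub s t) (ht : NoVar t) (hmin : t.IsMinimal) :
    s.IsMinimal := by
  induction h with
  | refl => exact hmin
  | left b _ ih =>
    refine ih ht.1 fun a' ha' hstep => ?_
    exact (MTerm.app.inj (hmin (.app a' b) ⟨ha', ht.2⟩ (.left b hstep))).1
  | right a _ ih =>
    refine ih ht.2 fun b' hb' hstep => ?_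
    exact (MTerm.app.inj (hmin (.app a b') ⟨ht.1, hb'⟩ (.right a hstep))).2

theorem MTerm.not_isMinimal_dup {u v : MTerm} (h : NoVar (.app u v)) :
    ¬ (MTerm.app (.app u v) (.app u v)).IsMinimal := fun hmin =>
  MTerm.noConfusion (MTerm.app.inj (hmin (.app .M (.app u v)) ⟨trivial, h⟩ (.mock _))).1

/-- The only step into a combinator that changes the term is `M (u v) ⟶ (u v) (u v)`:
`M M ⟶ M M` is trivial, and `M x` with `x` a variable does not occur. -/
theorem MStep.eq_or_dup_subterm {t' t : MTerm} (h : MStep t' t) (ht : NoVar t) :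
    t' = t ∨ ∃ u v, MSub (.app (.app u v) (.app u v)) t := by
  induction h with
  | mock s =>
    cases s with
    | M => exact .inl rfl
    | var n => exact ht.1.elim
    | app u v => exact .inr ⟨u, v, .refl _⟩
  | left u _ ih =>
    rcases ih ht.1 with rfl | ⟨u', v', hs⟩
    · exact .inl rfl
    · exact .inr ⟨u', v', .left _ hs⟩
  | right u _ ih =>
    rcases ih ht.2 with rfl | ⟨u', v', hs⟩
    · exact .inl rfl
    · exact .inr ⟨u', v', .right _ hs⟩

/-- A combinator over {M} is a minimal element of the rewrite order if and only if it
avoids the pattern (x₁ x₂)(x₁ x₂), i.e. it has no subterm of the form (u v)(u v). -/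
theorem mockingbird_minimal_iff (t : MTerm) (hc : NoVar t) :
    (∀ t', NoVar t' → MStep t' t → t' = t) ↔
      ∀ u v : MTerm, ¬ MSub (.app (.app u v) (.app u v)) t := by
  constructor
  · intro hmin u v hsub
    exact MTerm.not_isMinimal_dup (hsub.noVar hc).1 (hsub.isMinimal hc hmin)
  · intro hfree t' _ hstep
    rcases hstep.eq_or_dup_subterm hc with heq | ⟨u, v, hsub⟩
    · exact heq
    · exact absurd hsub (hfree u v)
end

section
/- For every term t over {M}, the set of terms t' with t <= t' in the Mockingbird rewrite order is a finite lattice under this order. -/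
/-!
Above `a b` with `a ≠ M` the reducts are exactly the `a' b'` with `a ≤ a'`, `b ≤ b'`, ordered
componentwise. Above `M b` they are the `M x` with `b ≤ x` and the `c d` with `c ≠ M` and
`b ≤ c`, `b ≤ d`, where `M x ≤ c d` iff `x ≤ c` and `x ≤ d`. In both cases binary joins are
computed from joins of the components, so structural induction gives joins and finiteness of
every up-set. Meets then come for free: the up-set of `t` is finite with least element `t`, so
the join of all common lower bounds of `a` and `b` above `t` is their meet there.
-/

section JoinsToMeets

variable {α : Type*} [Preorder α]

theorem isLUB_pair_iff {a b s : α} :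
    IsLUB {a, b} s ↔ a ≤ s ∧ b ≤ s ∧ ∀ w, a ≤ w → b ≤ w → s ≤ w := by
  simp [IsLUB, IsLeast, upperBounds_insert, lowerBounds, and_assoc]

theorem mem_lowerBounds_pair {a b w : α} : w ∈ lowerBounds {a, b} ↔ w ≤ a ∧ w ≤ b := by
  simp [lowerBounds_insert]

theorem IsLUB.insert_of_isLUB_pair {A : Set α} {s x j : α} (hs : IsLUB A s)
    (hj : IsLUB {x, s} j) : IsLUB (insert x A) j := by
  rw [isLUB_iff_le_iff] at hs hj ⊢
  intro w
  rw [hj, upperBounds_insert, upperBounds_insert, upperBounds_singleton]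
  exact Iff.and Iff.rfl (hs w)

theorem exists_isLUB_insert_of_finite {t : α}
    (hjoin : ∀ a b, t ≤ a → t ≤ b → ∃ s, IsLUB {a, b} s) {S : Set α} (hS : S.Finite)
    (hSt : S ⊆ Set.Ici t) : ∃ s, IsLUB (insert t S) s := by
  induction S, hS using Set.Finite.induction_on with
  | empty => exact ⟨t, by simp⟩
  | @insert x S _ _ ih =>
    obtain ⟨s, hs⟩ := ih ((Set.subset_insert x S).trans hSt)
    obtain ⟨j, hj⟩ := hjoin x s (hSt (Set.mem_insert x S)) (hs.1 (Set.mem_insert t S))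
    exact ⟨j, Set.insert_comm x t S ▸ hs.insert_of_isLUB_pair hj⟩

theorem exists_isGreatest_Ici_inter_lowerBounds_pair {t a b : α} (hfin : (Set.Ici t).Finite)
    (hjoin : ∀ a b, t ≤ a → t ≤ b → ∃ s, IsLUB {a, b} s) (hta : t ≤ a) (htb : t ≤ b) :
    ∃ m, IsGreatest (Set.Ici t ∩ lowerBounds {a, b}) m := by
  set L := Set.Ici t ∩ lowerBounds {a, b}
  have htL : t ∈ L := ⟨le_rfl, mem_lowerBounds_pair.2 ⟨hta, htb⟩⟩
  obtain ⟨m, hm⟩ := exists_isLUB_insert_of_finite hjoin (hfin.subset Set.inter_subset_left)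
    Set.inter_subset_left
  rw [Set.insert_eq_of_mem htL] at hm
  have haL : a ∈ upperBounds L := fun w hw => (mem_lowerBounds_pair.1 hw.2).1
  have hbL : b ∈ upperBounds L := fun w hw => (mem_lowerBounds_pair.1 hw.2).2
  exact ⟨m, ⟨hm.1 htL, mem_lowerBounds_pair.2 ⟨hm.2 haL, hm.2 hbL⟩⟩, hm.1⟩

end JoinsToMeets

instance : Preorder MTerm where
  le := MLe
  le_refl _ := Relation.ReflTransGen.refl
  le_trans _ _ _ := Relation.ReflTransGen.trans

theorem MStep.ne_M {x y : MTerm} (h : MStep x y) : y ≠ .M := by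
  cases h <;> nofun

namespace MTerm

theorem eq_of_le_of_forall_not_step {t u : MTerm} (ht : ∀ v, ¬ MStep t v) (h : t ≤ u) :
    u = t := by
  obtain rfl | ⟨v, hv, -⟩ := Relation.ReflTransGen.cases_head h
  · rfl
  · exact absurd hv (ht v)

theorem Ici_eq_singleton_of_forall_not_step {t : MTerm} (ht : ∀ v, ¬ MStep t v) :
    Set.Ici t = {t} :=
  Set.eq_singleton_iff_unique_mem.2 ⟨Set.self_mem_Ici, fun _ => eq_of_le_of_forall_not_step ht⟩

theorem eq_M_of_M_le {u : MTerm} (h : M ≤ u) : u = M :=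
  eq_of_le_of_forall_not_step (by rintro _ ⟨⟩) h

theorem eq_M_of_le_M {c : MTerm} (h : c ≤ M) : c = M := by
  obtain h | ⟨v, -, hv⟩ := Relation.ReflTransGen.cases_tail h
  · exact h.symm
  · exact absurd rfl hv.ne_M

theorem ne_M_of_le {a b : MTerm} (h : a ≤ b) (ha : a ≠ M) : b ≠ M :=
  fun hb => ha (eq_M_of_le_M (hb ▸ h))

theorem app_le_app {a a' b b' : MTerm} (ha : a ≤ a') (hb : b ≤ b') : app a b ≤ app a' b' :=
  ((Relation.ReflTransGen.lift (app · b) (fun _ _ => MStep.left b) _ _ ha).trans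
    (Relation.ReflTransGen.lift (app a' ·) (fun _ _ => MStep.right a') _ _ hb))

theorem M_app_le_app {x c d : MTerm} (hc : x ≤ c) (hd : x ≤ d) : app M x ≤ app c d :=
  Relation.ReflTransGen.head (MStep.mock x) (app_le_app hc hd)

theorem exists_eq_app_of_app_le {a b u : MTerm} (h : app a b ≤ u) :
    ∃ c d, u = app c d ∧ (a ≤ c ∧ b ≤ d ∨ a = M ∧ b ≤ c ∧ b ≤ d) := by
  induction h with
  | refl => exact ⟨a, b, rfl, .inl ⟨le_rfl, le_rfl⟩⟩
  | tail _ hs ih =>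
    obtain ⟨c, d, rfl, hcd⟩ := ih
    cases hs with
    | mock => exact ⟨d, d, rfl, .inr <| hcd.elim (fun h => ⟨eq_M_of_le_M h.1, h.2, h.2⟩)
        (fun h => ⟨h.1, h.2.2, h.2.2⟩)⟩
    | left _ hs => exact ⟨_, d, rfl, hcd.imp (fun h => ⟨h.1.tail hs, h.2⟩)
        (fun h => ⟨h.1, h.2.1.tail hs, h.2.2⟩)⟩
    | right _ hs => exact ⟨c, _, rfl, hcd.imp (fun h => ⟨h.1, h.2.tail hs⟩)
        (fun h => ⟨h.1, h.2.1, h.2.2.tail hs⟩)⟩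

theorem exists_eq_app_of_app_le_of_ne_M {a b u : MTerm} (ha : a ≠ M) (h : app a b ≤ u) :
    ∃ c d, u = app c d ∧ a ≤ c ∧ b ≤ d := by
  obtain ⟨c, d, rfl, hcd⟩ := exists_eq_app_of_app_le h
  exact ⟨c, d, rfl, hcd.resolve_right (fun h => ha h.1)⟩

theorem app_le_app_iff {a b c d : MTerm} (ha : a ≠ M) :
    app a b ≤ app c d ↔ a ≤ c ∧ b ≤ d := by
  refine ⟨fun h => ?_, fun h => app_le_app h.1 h.2⟩
  obtain ⟨c, d, hcd, h⟩ := exists_eq_app_of_app_le_of_ne_M ha h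
  cases hcd
  exact h

theorem M_app_le_app_iff {x c d : MTerm} : app M x ≤ app c d ↔ (c = M ∨ x ≤ c) ∧ x ≤ d := by
  constructor
  · intro h
    obtain ⟨c, d, hcd, h | h⟩ := exists_eq_app_of_app_le h
    · cases hcd
      exact ⟨.inl (eq_M_of_M_le h.1), h.2⟩
    · cases hcd
      exact ⟨.inr h.2.1, h.2.2⟩
  · rintro ⟨rfl | hc, hd⟩
    exacts [app_le_app le_rfl hd, M_app_le_app hc hd]

theorem M_app_le_cases {b u : MTerm} (h : app M b ≤ u) :
    (∃ x, u = app M x ∧ b ≤ x) ∨ ∃ c d, u = app c d ∧ c ≠ M ∧ b ≤ c ∧ b ≤ d := by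
  obtain ⟨c, d, rfl, hcd⟩ := exists_eq_app_of_app_le h
  by_cases hc : c = M
  · exact .inl ⟨d, hc ▸ rfl, hcd.elim And.right (fun h => h.2.2)⟩
  · exact .inr ⟨c, d, rfl, hc,
      hcd.elim (fun h => absurd (eq_M_of_M_le h.1) hc) And.right⟩

theorem isLUB_app_app {a₁ a₂ b₁ b₂ a b : MTerm} (ha₁ : a₁ ≠ M) (ha₂ : a₂ ≠ M)
    (ha : IsLUB {a₁, a₂} a) (hb : IsLUB {b₁, b₂} b) :
    IsLUB {app a₁ b₁, app a₂ b₂} (app a b) := by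
  obtain ⟨ha₁a, ha₂a, ha⟩ := isLUB_pair_iff.1 ha
  obtain ⟨hb₁b, hb₂b, hb⟩ := isLUB_pair_iff.1 hb
  refine isLUB_pair_iff.2 ⟨app_le_app ha₁a hb₁b, app_le_app ha₂a hb₂b, fun w h₁ h₂ => ?_⟩
  obtain ⟨c, d, rfl, h₁c, h₁d⟩ := exists_eq_app_of_app_le_of_ne_M ha₁ h₁
  obtain ⟨h₂c, h₂d⟩ := (app_le_app_iff ha₂).1 h₂
  exact app_le_app (ha c h₁c h₂c) (hb d h₁d h₂d)

theorem isLUB_M_app_M_app {x y s : MTerm} (hs : IsLUB {x, y} s) :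
    IsLUB {app M x, app M y} (app M s) := by
  obtain ⟨hxs, hys, hs⟩ := isLUB_pair_iff.1 hs
  refine isLUB_pair_iff.2 ⟨app_le_app le_rfl hxs, app_le_app le_rfl hys, fun w hx hy => ?_⟩
  obtain ⟨c, d, rfl, -⟩ := exists_eq_app_of_app_le hx
  obtain ⟨hxc, hxd⟩ := M_app_le_app_iff.1 hx
  obtain ⟨hyc, hyd⟩ := M_app_le_app_iff.1 hy
  refine M_app_le_app_iff.2 ⟨?_, hs d hxd hyd⟩
  by_cases hc : c = M
  · exact .inl hc
  · exact .inr (hs c (hxc.resolve_left hc) (hyc.resolve_left hc))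

theorem isLUB_M_app_app {x c d s₁ s₂ : MTerm} (hc : c ≠ M) (hs₁ : IsLUB {x, c} s₁)
    (hs₂ : IsLUB {x, d} s₂) : IsLUB {app M x, app c d} (app s₁ s₂) := by
  obtain ⟨hxs₁, hcs₁, hs₁⟩ := isLUB_pair_iff.1 hs₁
  obtain ⟨hxs₂, hds₂, hs₂⟩ := isLUB_pair_iff.1 hs₂
  refine isLUB_pair_iff.2 ⟨M_app_le_app hxs₁ hxs₂, app_le_app hcs₁ hds₂, fun w hx hcd => ?_⟩
  obtain ⟨e, f, rfl, hce, hdf⟩ := exists_eq_app_of_app_le_of_ne_M hc hcd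
  obtain ⟨hxe, hxf⟩ := M_app_le_app_iff.1 hx
  exact app_le_app (hs₁ e (hxe.resolve_left (ne_M_of_le hce hc)) hce) (hs₂ f hxf hdf)

theorem exists_isLUB_pair {t u v : MTerm} (hu : t ≤ u) (hv : t ≤ v) :
    ∃ s, IsLUB {u, v} s := by
  induction t generalizing u v with
  | M | var =>
    rw [← Set.mem_Ici, Ici_eq_singleton_of_forall_not_step (by rintro _ ⟨⟩)] at hu hv
    rw [hu, hv, Set.pair_eq_singleton]
    exact ⟨_, isLUB_singleton⟩
  | app a b iha ihb =>
    by_cases ha : a = M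
    · subst ha
      rcases M_app_le_cases hu with ⟨x, rfl, hx⟩ | ⟨c, d, rfl, hc, hbc, hbd⟩ <;>
        rcases M_app_le_cases hv with ⟨y, rfl, hy⟩ | ⟨c', d', rfl, hc', hbc', hbd'⟩
      · obtain ⟨s, hs⟩ := ihb hx hy
        exact ⟨_, isLUB_M_app_M_app hs⟩
      · obtain ⟨s₁, hs₁⟩ := ihb hx hbc'
        obtain ⟨s₂, hs₂⟩ := ihb hx hbd'
        exact ⟨_, isLUB_M_app_app hc' hs₁ hs₂⟩
      · obtain ⟨s₁, hs₁⟩ := ihb hy hbc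
        obtain ⟨s₂, hs₂⟩ := ihb hy hbd
        exact ⟨_, Set.pair_comm _ _ ▸ isLUB_M_app_app hc hs₁ hs₂⟩
      · obtain ⟨s₁, hs₁⟩ := ihb hbc hbc'
        obtain ⟨s₂, hs₂⟩ := ihb hbd hbd'
        exact ⟨_, isLUB_app_app hc hc' hs₁ hs₂⟩
    · obtain ⟨c, d, rfl, hac, hbd⟩ := exists_eq_app_of_app_le_of_ne_M ha hu
      obtain ⟨c', d', rfl, hac', hbd'⟩ := exists_eq_app_of_app_le_of_ne_M ha hv
      obtain ⟨s₁, hs₁⟩ := iha hac hac'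
      obtain ⟨s₂, hs₂⟩ := ihb hbd hbd'
      exact ⟨_, isLUB_app_app (ne_M_of_le hac ha) (ne_M_of_le hac' ha) hs₁ hs₂⟩

theorem finite_Ici (t : MTerm) : (Set.Ici t).Finite := by
  induction t with
  | M | var =>
    rw [Ici_eq_singleton_of_forall_not_step (by rintro _ ⟨⟩)]
    exact Set.finite_singleton _
  | app a b iha ihb =>
    refine (((iha.prod ihb).union (ihb.prod ihb)).image fun p => app p.1 p.2).subset ?_
    intro u hu
    obtain ⟨c, d, rfl, h | h⟩ := exists_eq_app_of_app_le hu
    exacts [⟨(c, d), .inl h, rfl⟩, ⟨(c, d), .inr h.2, rfl⟩]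

end MTerm

/-- For every term t over {M}, the set of terms above t in the Mockingbird rewrite order
is a finite lattice: it is finite and every pair of its elements admits a least upper
bound and a greatest lower bound within it. -/
theorem mockingbird_finite_lattice (t : MTerm) :
    {u : MTerm | MLe t u}.Finite ∧
    (∀ a b : MTerm, MLe t a → MLe t b →
      (∃ s, MLe t s ∧ MLe a s ∧ MLe b s ∧
        ∀ w, MLe t w → MLe a w → MLe b w → MLe s w) ∧
      (∃ m, MLe t m ∧ MLe m a ∧ MLe m b ∧
        ∀ w, MLe t w → MLe w a → MLe w b → MLe w m)) := by
  refine ⟨MTerm.finite_Ici t, fun a b hta htb => ⟨?_, ?_⟩⟩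
  · obtain ⟨s, hs⟩ := MTerm.exists_isLUB_pair hta htb
    obtain ⟨has, hbs, hleast⟩ := isLUB_pair_iff.1 hs
    exact ⟨s, hta.trans has, has, hbs, fun w _ => hleast w⟩
  · obtain ⟨m, ⟨htm, hm⟩, hmax⟩ := exists_isGreatest_Ici_inter_lowerBounds_pair
      (MTerm.finite_Ici t) (fun _ _ => MTerm.exists_isLUB_pair) hta htb
    obtain ⟨hma, hmb⟩ := mem_lowerBounds_pair.1 hm
    exact ⟨m, htm, hma, hmb, fun w htw hwa hwb =>
      hmax ⟨htw, mem_lowerBounds_pair.2 ⟨hwa, hwb⟩⟩⟩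
end

section
/- The Mockingbird lattice M(d) of order d has cardinality a(d-1) for d >= 1, where a(0) = 1 and a(n) = a(n-1) + a(n-1)^2 for n >= 1. In particular the cardinalities of M(0), M(1), M(2), ... are 1, 1, 2, 6, 42, 1806. -/
/-- The right comb combinator of degree d: r₀ = M and r_d = M r_{d-1}. -/
def comb : ℕ → MTerm
  | 0 => .M
  | d + 1 => .app .M (comb d)

/-- a(0) = 1, a(n) = a(n-1) + a(n-1)². -/
def seqA : ℕ → ℕ
  | 0 => 1
  | n + 1 => seqA n + (seqA n) ^ 2

/-!
Rewriting `M s` either contracts the root redex, giving `s s`, or rewrites inside `s`; after a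
contraction the two copies of `s` evolve independently. So the terms above `M s` are exactly the
`M u` and the `u v` with `s ≤ u` and `s ≤ v`, and `M(d + 1)` is the union of `M · M(d)` and
`M(d) × M(d)`, disjoint once `d ≥ 1` (then `M ∉ M(d)`). This gives
`|M(d + 1)| = |M(d)| + |M(d)|²`.
-/

theorem Set.encard_image2 {α β γ : Type*} {f : α → β → γ} (hf : Function.Injective2 f)
    (s : Set α) (t : Set β) : (Set.image2 f s t).encard = s.encard * t.encard := by
  rw [← Set.image_uncurry_prod, hf.uncurry.encard_image, Set.encard_prod]

theorem MTerm.app_injective2 : Function.Injective2 MTerm.app := fun _ _ _ _ => MTerm.app.inj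

namespace MLe

theorem app_left {t t' : MTerm} (u : MTerm) (h : MLe t t') : MLe (.app t u) (.app t' u) :=
  h.lift (MTerm.app · u) fun _ _ => MStep.left u

theorem app_right (u : MTerm) {t t' : MTerm} (h : MLe t t') : MLe (.app u t) (.app u t') :=
  h.lift (MTerm.app u) fun _ _ => MStep.right u

theorem eq_M {t : MTerm} (h : MLe .M t) : t = .M := by
  rcases h.cases_head with h | ⟨_, hstep, _⟩
  · exact h.symm
  · cases hstep

theorem M_app_iff {s t : MTerm} :
    MLe (.app .M s) t ↔
      (∃ u, t = .app .M u ∧ MLe s u) ∨ ∃ u v, t = .app u v ∧ MLe s u ∧ MLe s v := by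
  constructor
  · intro h
    induction h with
    | refl => exact .inl ⟨s, rfl, .refl⟩
    | tail _ hstep ih =>
      rcases ih with ⟨u, rfl, hu⟩ | ⟨u, v, rfl, hu, hv⟩
      · cases hstep with
        | mock => exact .inr ⟨u, u, rfl, hu, hu⟩
        | left _ h => cases h
        | right _ h => exact .inl ⟨_, rfl, hu.tail h⟩
      · cases hstep with
        | mock => exact .inr ⟨v, v, rfl, hv, hv⟩
        | left _ h => exact .inr ⟨_, v, rfl, hu.tail h, hv⟩
        | right _ h => exact .inr ⟨u, _, rfl, hu, hv.tail h⟩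
  · rintro (⟨u, rfl, hu⟩ | ⟨u, v, rfl, hu, hv⟩)
    · exact app_right _ hu
    · exact (Relation.ReflTransGen.single (MStep.mock s)).trans
        ((app_left _ hu).trans (app_right _ hv))

end MLe

def mockingbirdLattice (d : ℕ) : Set MTerm := {t | MLe (comb d) t}

theorem mockingbirdLattice_zero : mockingbirdLattice 0 = {MTerm.M} :=
  Set.ext fun _ => ⟨MLe.eq_M, fun h => h ▸ .refl⟩

theorem mockingbirdLattice_succ (d : ℕ) :
    mockingbirdLattice (d + 1) =
      MTerm.app .M '' mockingbirdLattice d ∪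
        Set.image2 MTerm.app (mockingbirdLattice d) (mockingbirdLattice d) := by
  ext t
  simp only [mockingbirdLattice, comb, Set.mem_ofPred_eq, Set.mem_union, Set.mem_image,
    Set.mem_image2, MLe.M_app_iff]
  grind

theorem mockingbirdLattice_one : mockingbirdLattice 1 = {MTerm.app .M .M} := by
  simp [mockingbirdLattice_succ, mockingbirdLattice_zero]

theorem M_notMem_mockingbirdLattice_succ (d : ℕ) : MTerm.M ∉ mockingbirdLattice (d + 1) := by
  rw [mockingbirdLattice_succ]
  rintro (⟨_, _, h⟩ | ⟨_, _, _, _, h⟩) <;> cases h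

theorem encard_mockingbirdLattice_succ_succ (d : ℕ) :
    (mockingbirdLattice (d + 2)).encard =
      (mockingbirdLattice (d + 1)).encard + (mockingbirdLattice (d + 1)).encard ^ 2 := by
  have hdisj : Disjoint (MTerm.app .M '' mockingbirdLattice (d + 1))
      (Set.image2 MTerm.app (mockingbirdLattice (d + 1)) (mockingbirdLattice (d + 1))) := by
    rw [Set.disjoint_left]
    rintro _ ⟨u, _, rfl⟩ ⟨a, ha, b, _, hab⟩
    cases hab
    exact M_notMem_mockingbirdLattice_succ d ha
  rw [mockingbirdLattice_succ (d + 1), Set.encard_union_eq hdisj,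
    (MTerm.app_injective2.right .M).encard_image,
    Set.encard_image2 MTerm.app_injective2, sq]

theorem encard_mockingbirdLattice_succ (d : ℕ) :
    (mockingbirdLattice (d + 1)).encard = seqA d := by
  induction d with
  | zero => simp [mockingbirdLattice_one, seqA]
  | succ d ih => rw [encard_mockingbirdLattice_succ_succ, ih, seqA]; norm_cast

/-- The Mockingbird lattice M(d) = {t : comb d ≤ t} has cardinality a(d-1) for d ≥ 1;
together with M(0) of cardinality 1, the cardinalities are 1, 1, 2, 6, 42, 1806, …. -/
theorem mockingbird_lattice_card :
    Nat.card {t : MTerm // MLe (comb 0) t} = 1 ∧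
    ∀ d : ℕ, 1 ≤ d → Nat.card {t : MTerm // MLe (comb d) t} = seqA (d - 1) := by
  have hcard (d : ℕ) : Nat.card {t : MTerm // MLe (comb d) t} =
      (mockingbirdLattice d).encard.toNat := rfl
  refine ⟨by simp [hcard, mockingbirdLattice_zero], fun d hd => ?_⟩
  obtain ⟨e, rfl⟩ := Nat.exists_eq_add_of_le' hd
  simp [hcard, encard_mockingbirdLattice_succ]
end

section
/- Over any field of characteristic zero, the generating function F(z) counting maximal combinators of the Mockingbird rewrite poset by degree (number of applications) satisfies F = 1 + z + z F^2 - z F; consequently the coefficients are the Motzkin numbers 1, 1, 1, 2, 4, 9, 21, 51, ... -/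
/-- Number of maximal combinators of the Mockingbird rewrite poset of degree d. -/
noncomputable def maxCount (d : ℕ) : ℕ :=
  Nat.card {t : MTerm // NoVar t ∧ (∀ t', MLe t t' → t' = t) ∧ deg t = d}

/-- The generating series of maximal combinators counted by degree, over a field K. -/
noncomputable def maxSeries (K : Type*) [Field K] : PowerSeries K :=
  PowerSeries.mk fun d => (maxCount d : K)

/-!
Contracting a factor `M (u v)` strictly increases the degree, whereas `M M` contracts to itself;
hence a combinator is maximal exactly when it has no factor `M (u v)`. A maximal combinator of
degree `n + 2` is then `a b` with `a` maximal of positive degree and `b` maximal, so the counts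
satisfy `c₀ = c₁ = 1` and `c (n + 2) = ∑_{i + j = n} c (i + 1) * c j`; writing `F = 1 + X T`
this reads `T = 1 + X T F`, which rearranges to `F = 1 + X + X F² - X F`.
-/

open Finset PowerSeries

deriving instance DecidableEq for MTerm

/-- Combinators without a factor `M (u v)`. -/
def IsMaxComb : MTerm → Prop
  | .M => True
  | .var _ => False
  | .app a b => IsMaxComb a ∧ IsMaxComb b ∧ (a = .M → b = .M)

namespace IsMaxComb

theorem noVar : ∀ {t : MTerm}, IsMaxComb t → NoVar t
  | .M, _ => trivial
  | .app _ _, ⟨ha, hb, _⟩ => ⟨ha.noVar, hb.noVar⟩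

theorem eq_of_mStep {t t' : MTerm} (ht : IsMaxComb t) (h : MStep t t') : t' = t := by
  induction h with
  | mock s =>
    obtain ⟨-, -, hs⟩ := ht
    rw [hs rfl]
  | left u _ ih => rw [ih ht.1]
  | right u _ ih => rw [ih ht.2.1]

theorem eq_of_mLe {t t' : MTerm} (ht : IsMaxComb t) (h : MLe t t') : t' = t := by
  induction h with
  | refl => rfl
  | tail _ hstep ih =>
    subst ih
    exact ht.eq_of_mStep hstep

theorem eq_M_of_deg_eq_zero : ∀ {t : MTerm}, IsMaxComb t → deg t = 0 → t = .M
  | .M, _, _ => rfl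
  | .app _ _, _, h => by simp [deg] at h

theorem app_iff_of_deg_pos {a b : MTerm} (ha : 0 < deg a) :
    IsMaxComb (.app a b) ↔ IsMaxComb a ∧ IsMaxComb b := by
  have : a ≠ .M := by rintro rfl; simp [deg] at ha
  simp [IsMaxComb, this]

end IsMaxComb

theorem exists_mStep_deg_lt : ∀ {t : MTerm}, NoVar t → ¬ IsMaxComb t →
    ∃ t', MStep t t' ∧ deg t < deg t'
  | .M, _, hmax => absurd trivial hmax
  | .app a b, ⟨ha, hb⟩, hmax => by
    by_cases hma : IsMaxComb a
    · by_cases hmb : IsMaxComb b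
      · obtain ⟨rfl, hbM⟩ : a = .M ∧ b ≠ .M := by
          by_contra h
          exact hmax ⟨hma, hmb, fun ha => not_and_not_right.mp h ha⟩
        obtain ⟨u, v, rfl⟩ : ∃ u v, b = .app u v := by
          cases b <;> simp_all [NoVar]
        exact ⟨_, .mock _, by simp only [deg]; omega⟩
      · obtain ⟨b', hstep, hdeg⟩ := exists_mStep_deg_lt hb hmb
        exact ⟨_, .right a hstep, by simp only [deg]; omega⟩
    · obtain ⟨a', hstep, hdeg⟩ := exists_mStep_deg_lt ha hma
      exact ⟨_, .left b hstep, by simp only [deg]; omega⟩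

theorem isMaxComb_iff {t : MTerm} : IsMaxComb t ↔ NoVar t ∧ ∀ t', MLe t t' → t' = t := by
  refine ⟨fun ht => ⟨ht.noVar, fun _ h => ht.eq_of_mLe h⟩, fun ⟨hvar, hmax⟩ => ?_⟩
  by_contra ht
  obtain ⟨t', hstep, hdeg⟩ := exists_mStep_deg_lt hvar ht
  rw [hmax t' (.single hstep)] at hdeg
  exact hdeg.false

def maxCombs : ℕ → Finset MTerm
  | 0 => {.M}
  | 1 => {.app .M .M}
  | n + 2 => (antidiagonal n).attach.biUnion fun p =>
      (maxCombs (p.1.1 + 1) ×ˢ maxCombs p.1.2).image fun q => .app q.1 q.2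
  decreasing_by
  all_goals have := mem_antidiagonal.mp p.2; omega

theorem mem_maxCombs {n : ℕ} {t : MTerm} : t ∈ maxCombs n ↔ IsMaxComb t ∧ deg t = n := by
  induction n using Nat.strong_induction_on generalizing t with
  | _ n ih =>
  match n, t with
  | 0, t =>
    rw [maxCombs, mem_singleton]
    exact ⟨by rintro rfl; exact ⟨trivial, rfl⟩, fun ⟨ht, hd⟩ => ht.eq_M_of_deg_eq_zero hd⟩
  | 1, t =>
    rw [maxCombs, mem_singleton]
    refine ⟨by rintro rfl; exact ⟨⟨trivial, trivial, fun _ => rfl⟩, rfl⟩, ?_⟩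
    rintro ⟨ht, hd⟩
    cases t with
    | M => simp [deg] at hd
    | var => exact ht.elim
    | app a b =>
      simp only [deg] at hd
      rw [ht.1.eq_M_of_deg_eq_zero (by omega), ht.2.1.eq_M_of_deg_eq_zero (by omega)]
  | n + 2, t =>
    simp only [maxCombs, mem_biUnion, mem_attach, true_and, mem_image, mem_product,
      Subtype.exists, HasAntidiagonal.mem_antidiagonal, Prod.exists]
    constructor
    · rintro ⟨i, j, hij, a, b, ⟨ha, hb⟩, rfl⟩
      rw [ih _ (by omega)] at ha hb
      refine ⟨(IsMaxComb.app_iff_of_deg_pos (by omega)).2 ⟨ha.1, hb.1⟩, ?_⟩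
      simp only [deg]
      omega
    · rintro ⟨ht, hd⟩
      cases t with
      | M => simp [deg] at hd
      | var => exact ht.elim
      | app a b =>
        simp only [deg] at hd
        have ha : 0 < deg a := by
          by_contra! ha
          have haM := ht.1.eq_M_of_deg_eq_zero (by omega)
          have hbM := ht.2.2 haM
          subst haM hbM
          simp [deg] at hd
        obtain ⟨hma, hmb⟩ := (IsMaxComb.app_iff_of_deg_pos ha).1 ht
        exact ⟨deg a - 1, deg b, by omega, a, b,
          ⟨(ih _ (by omega)).2 ⟨hma, by omega⟩, (ih _ (by omega)).2 ⟨hmb, rfl⟩⟩, rfl⟩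

theorem app_uncurry_injective : Function.Injective fun q : MTerm × MTerm => MTerm.app q.1 q.2 :=
  fun _ _ h => Prod.ext (MTerm.app.inj h).1 (MTerm.app.inj h).2

theorem card_maxCombs_add_two (n : ℕ) :
    #(maxCombs (n + 2)) = ∑ p ∈ antidiagonal n, #(maxCombs (p.1 + 1)) * #(maxCombs p.2) := by
  rw [maxCombs, card_biUnion, ← sum_attach (antidiagonal n)]
  · simp only [card_image_of_injective _ app_uncurry_injective, card_product]
  · intro p _ q _ hpq
    refine disjoint_left.2 fun t hp hq => hpq ?_
    simp only [mem_image, mem_product] at hp hq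
    obtain ⟨⟨a, b⟩, ⟨ha, -⟩, rfl⟩ := hp
    obtain ⟨⟨a', b'⟩, ⟨ha', -⟩, h⟩ := hq
    obtain ⟨rfl, rfl⟩ := MTerm.app.inj h
    have hp := HasAntidiagonal.mem_antidiagonal.1 p.2
    have hq := HasAntidiagonal.mem_antidiagonal.1 q.2
    have hpq := (mem_maxCombs.1 ha).2.symm.trans (mem_maxCombs.1 ha').2
    exact Subtype.ext (Prod.ext (by omega) (by omega))

theorem maxCount_eq_card (n : ℕ) : maxCount n = #(maxCombs n) := by
  rw [maxCount, ← Nat.card_eq_finsetCard]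
  exact Nat.card_congr <| Equiv.subtypeEquivRight fun t => by
    rw [mem_maxCombs, isMaxComb_iff, and_assoc]

theorem maxCount_zero : maxCount 0 = 1 := by
  rw [maxCount_eq_card, maxCombs, card_singleton]

theorem maxCount_one : maxCount 1 = 1 := by
  rw [maxCount_eq_card, maxCombs, card_singleton]

theorem maxCount_add_two (n : ℕ) :
    maxCount (n + 2) = ∑ p ∈ antidiagonal n, maxCount (p.1 + 1) * maxCount p.2 := by
  simp only [maxCount_eq_card, card_maxCombs_add_two]

theorem maxCount_first_values :
    maxCount 0 = 1 ∧ maxCount 1 = 1 ∧ maxCount 2 = 1 ∧ maxCount 3 = 2 ∧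
    maxCount 4 = 4 ∧ maxCount 5 = 9 ∧ maxCount 6 = 21 ∧ maxCount 7 = 51 := by
  simp [maxCount_add_two, Nat.sum_antidiagonal_succ, maxCount_zero, maxCount_one]

theorem maxSeries_functional_eq (K : Type*) [Field K] :
    maxSeries K = 1 + X + X * maxSeries K ^ 2 - X * maxSeries K := by
  set F := maxSeries K
  set T : K⟦X⟧ := mk fun n => (maxCount (n + 1) : K)
  set U : K⟦X⟧ := mk fun n => (maxCount (n + 2) : K)
  have hF : F = X * T + 1 := by
    refine (eq_X_mul_shift_add_const F).trans ?_
    simp [F, T, maxSeries, maxCount_zero]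
  have hT : T = X * U + 1 := by
    refine (eq_X_mul_shift_add_const T).trans ?_
    simp [T, U, maxCount_one]
  have hU : U = T * F := by
    ext n
    simp [U, T, F, maxSeries, coeff_mul, maxCount_add_two]
  linear_combination (1 - X * F) * hF + X * hT + X ^ 2 * hU

open PowerSeries in
theorem maximal_generating_series_general (K : Type*) [Field K] :
    maxSeries K = 1 + X + X * maxSeries K ^ 2 - X * maxSeries K ∧
    maxCount 0 = 1 ∧ maxCount 1 = 1 ∧ maxCount 2 = 1 ∧ maxCount 3 = 2 ∧
    maxCount 4 = 4 ∧ maxCount 5 = 9 ∧ maxCount 6 = 21 ∧ maxCount 7 = 51 :=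
  ⟨maxSeries_functional_eq K, maxCount_first_values⟩

open PowerSeries in
/-- Over any field of characteristic zero, the generating series F of maximal combinators
counted by degree satisfies F = 1 + z + z F² - z F; its coefficients are the Motzkin
numbers 1, 1, 1, 2, 4, 9, 21, 51, …. -/
theorem maximal_generating_series (K : Type*) [Field K] [CharZero K] :
    maxSeries K = 1 + X + X * maxSeries K ^ 2 - X * maxSeries K ∧
    maxCount 0 = 1 ∧ maxCount 1 = 1 ∧ maxCount 2 = 1 ∧ maxCount 3 = 2 ∧
    maxCount 4 = 4 ∧ maxCount 5 = 9 ∧ maxCount 6 = 21 ∧ maxCount 7 = 51 :=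
  maximal_generating_series_general K
end

section
/- The number m(d) of combinators over {M} of degree d avoiding the factor M (x_1 x_2) satisfies m(0) = m(1) = 1 and, for d >= 2, m(d) = sum over decompositions of a product minus a correction: equivalently m satisfies the Motzkin recurrence arising from F = 1 + z + z F^2 - z F, i.e., m(d) = (sum_{i=0}^{d-1} m(i) m(d-1-i)) - m(d-1) for d >= 2. -/
/-- Number of combinators over {M} of degree d avoiding the factor M (x₁ x₂). -/
noncomputable def mCount (d : ℕ) : ℕ :=
  Nat.card {t : MTerm // NoVar t ∧ deg t = d ∧
    ∀ u v : MTerm, ¬ MSub (.app .M (.app u v)) t}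

/-!
A combinator of degree `e + 1` is a product `a b` of combinators with `deg a + deg b = e`, and it
avoids `M (x₁ x₂)` iff `a` and `b` do and the root is not `M` applied to an application. Among
combinators this root condition reads `deg a = 0 → deg b = 0`, so for `e ≥ 1` the only excluded
splitting is `(0, e)`, which contributes `m(0) m(e) = m(e)` to the convolution sum.
-/

deriving instance DecidableEq for MTerm

open Finset

def Avoids (t : MTerm) : Prop := ∀ u v : MTerm, ¬ MSub (.app .M (.app u v)) t

lemma msub_M_iff {s : MTerm} : MSub s .M ↔ s = .M :=
  ⟨fun h => by cases h; rfl, fun h => h ▸ .refl _⟩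

lemma msub_app_iff {s a b : MTerm} :
    MSub s (.app a b) ↔ s = .app a b ∨ MSub s a ∨ MSub s b := by
  constructor
  · rintro (_ | ⟨_, h⟩ | ⟨_, h⟩)
    exacts [.inl rfl, .inr (.inl h), .inr (.inr h)]
  · rintro (rfl | h | h)
    exacts [.refl _, .left _ h, .right _ h]

lemma avoids_M : Avoids .M := fun _ _ h => by cases msub_M_iff.mp h

lemma avoids_app_iff {a b : MTerm} :
    Avoids (.app a b) ↔ Avoids a ∧ Avoids b ∧ (a = .M → ∀ u v, b ≠ .app u v) := by
  simp only [Avoids, msub_app_iff, MTerm.app.injEq, not_or]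
  constructor
  · intro h
    exact ⟨fun u v => (h u v).2.1, fun u v => (h u v).2.2,
      fun ha u v hb => (h u v).1 ⟨ha.symm, hb.symm⟩⟩
  · rintro ⟨ha, hb, hab⟩ u v
    exact ⟨fun ⟨h₁, h₂⟩ => hab h₁.symm u v h₂.symm, ha u v, hb u v⟩

namespace NoVar

lemma eq_M_iff {t : MTerm} (ht : NoVar t) : t = .M ↔ deg t = 0 := by
  cases t <;> simp_all [NoVar, deg]

lemma forall_ne_app_iff {t : MTerm} (ht : NoVar t) : (∀ u v, t ≠ .app u v) ↔ deg t = 0 := by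
  cases t <;> simp_all [NoVar, deg]

end NoVar

lemma avoids_app_iff_of_noVar {a b : MTerm} (ha : NoVar a) (hb : NoVar b) :
    Avoids (.app a b) ↔ Avoids a ∧ Avoids b ∧ (deg a = 0 → deg b = 0) := by
  rw [avoids_app_iff, ha.eq_M_iff, hb.forall_ne_app_iff]

lemma finite_setOf_noVar_deg_le (n : ℕ) : {t | NoVar t ∧ deg t ≤ n}.Finite := by
  induction n with
  | zero =>
    refine (Set.finite_singleton MTerm.M).subset fun t ⟨ht, hd⟩ => ?_
    exact ht.eq_M_iff.mpr (Nat.le_zero.mp hd)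
  | succ n ih =>
    refine ((ih.image2 MTerm.app ih).insert MTerm.M).subset ?_
    rintro (_ | _ | ⟨a, b⟩) ⟨ht, hd⟩
    · exact .inl rfl
    · exact ht.elim
    · simp only [deg] at hd
      exact .inr ⟨a, ⟨ht.1, by omega⟩, b, ⟨ht.2, by omega⟩, rfl⟩

lemma finite_setOf_avoids (d : ℕ) : {t | NoVar t ∧ deg t = d ∧ Avoids t}.Finite :=
  (finite_setOf_noVar_deg_le d).subset fun _ ⟨ht, hd, _⟩ => ⟨ht, hd.le⟩

noncomputable def avoiders (d : ℕ) : Finset MTerm := (finite_setOf_avoids d).toFinset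

lemma mem_avoiders {d : ℕ} {t : MTerm} : t ∈ avoiders d ↔ NoVar t ∧ deg t = d ∧ Avoids t :=
  Set.Finite.mem_toFinset _

lemma mCount_eq_card_avoiders (d : ℕ) : mCount d = #(avoiders d) :=
  Set.ncard_eq_toFinset_card _ (finite_setOf_avoids d)

lemma avoiders_zero : avoiders 0 = {.M} := by
  ext t
  rw [mem_avoiders, mem_singleton]
  refine ⟨fun ⟨ht, hd, _⟩ => ht.eq_M_iff.mpr hd, ?_⟩
  rintro rfl
  exact ⟨trivial, rfl, avoids_M⟩

lemma avoiders_succ (e : ℕ) :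
    avoiders (e + 1) = {ij ∈ antidiagonal e | ij.1 = 0 → ij.2 = 0}.biUnion
      fun ij => image₂ .app (avoiders ij.1) (avoiders ij.2) := by
  ext t
  simp only [mem_biUnion, mem_filter, HasAntidiagonal.mem_antidiagonal, mem_image₂, mem_avoiders,
    Prod.exists]
  constructor
  · rintro ⟨ht, hd, hav⟩
    rcases t with _ | _ | ⟨a, b⟩
    · cases hd
    · exact ht.elim
    · obtain ⟨ha, hb, hab⟩ := (avoids_app_iff_of_noVar ht.1 ht.2).mp hav
      simp only [deg, Nat.add_right_cancel_iff] at hd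
      exact ⟨deg a, deg b, ⟨hd, hab⟩, a, ⟨ht.1, rfl, ha⟩, b, ⟨ht.2, rfl, hb⟩, rfl⟩
  · rintro ⟨i, j, ⟨hij, hj⟩, a, ⟨ha, rfl, ha'⟩, b, ⟨hb, rfl, hb'⟩, rfl⟩
    exact ⟨⟨ha, hb⟩, by simp only [deg, hij],
      (avoids_app_iff_of_noVar ha hb).mpr ⟨ha', hb', hj⟩⟩

lemma mCount_succ (e : ℕ) :
    mCount (e + 1) = ∑ ij ∈ antidiagonal e with ij.1 = 0 → ij.2 = 0, mCount ij.1 * mCount ij.2 := by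
  simp only [mCount_eq_card_avoiders, avoiders_succ]
  rw [card_biUnion]
  · exact sum_congr rfl fun ij _ => card_image₂ (fun _ _ _ _ h => MTerm.app.inj h) _ _
  · intro ij hij ij' hij' hne
    refine disjoint_left.mpr fun t ht ht' => hne ?_
    obtain ⟨a, ha, b, -, rfl⟩ := mem_image₂.mp ht
    obtain ⟨a', ha', b', -, h⟩ := mem_image₂.mp ht'
    cases h
    simp only [coe_filter, HasAntidiagonal.mem_antidiagonal, Set.mem_ofPred_eq] at hij hij'
    have hfst : ij.1 = ij'.1 := (mem_avoiders.mp ha).2.1.symm.trans (mem_avoiders.mp ha').2.1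
    exact Prod.ext hfst (by omega)

lemma mCount_zero : mCount 0 = 1 := by
  rw [mCount_eq_card_avoiders, avoiders_zero, card_singleton]

lemma mCount_one : mCount 1 = 1 := by
  rw [mCount_succ, Nat.antidiagonal_zero, filter_singleton, if_pos fun _ => rfl, sum_singleton,
    mCount_zero]

lemma mCount_succ_add_mCount {e : ℕ} (he : 1 ≤ e) :
    mCount (e + 1) + mCount e = ∑ i ∈ range (e + 1), mCount i * mCount (e - i) := by
  have hnot : {ij ∈ antidiagonal e | ¬(ij.1 = 0 → ij.2 = 0)} = {(0, e)} := by
    ext ⟨i, j⟩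
    simp only [mem_filter, HasAntidiagonal.mem_antidiagonal, mem_singleton, Prod.mk.injEq]
    omega
  rw [← Nat.sum_antidiagonal_eq_sum_range_succ (fun i j => mCount i * mCount j),
    ← sum_filter_add_sum_filter_not _ (fun ij => ij.1 = 0 → ij.2 = 0), hnot, mCount_succ,
    sum_singleton, mCount_zero, one_mul]

/-- mCount satisfies the Motzkin recurrence:
m(0) = m(1) = 1 and m(d) = (∑_{i=0}^{d-1} m(i) m(d-1-i)) - m(d-1) for d ≥ 2. -/
theorem avoid_MApp_recurrence :
    mCount 0 = 1 ∧ mCount 1 = 1 ∧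
    ∀ d : ℕ, 2 ≤ d →
      mCount d = (∑ i ∈ Finset.range d, mCount i * mCount (d - 1 - i)) - mCount (d - 1) := by
  refine ⟨mCount_zero, mCount_one, fun d hd => ?_⟩
  obtain ⟨e, rfl⟩ : ∃ e, d = e + 1 := ⟨d - 1, by omega⟩
  have hrec := mCount_succ_add_mCount (e := e) (by omega)
  simp only [Nat.add_sub_cancel]
  omega
end

section
/- In the Mockingbird rewrite poset, each equivalence class under the rewrite equivalence has a unique minimal element and a unique maximal element with respect to the rewrite order. -/
/-!
Both extremes of a class are computed bottom-up. `maxForm` normalizes the subterms and then fires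
a root redex `M s` unless `s = M`; `minForm` normalizes the subterms and contracts a root square
`s s` to `M s` unless `s = M`. Each is invariant under a step and reachable from its argument
(upwards, resp. downwards), and its values are exactly the terms all of whose outgoing, resp.
incoming, steps are the loop `M M → M M`. A maximal (minimal) element of a class is such a term,
hence a fixed point of the normal form, which is constant on the class.
-/

namespace Relation

variable {α : Type*} {r : α → α → Prop}

/-- Loops are allowed because `M M → M M` is a step. -/
def IsTerminal (r : α → α → Prop) (a : α) : Prop := ∀ b, r a b → b = a

theorem IsTerminal.eq_of_reflTransGen {a b : α} (ha : IsTerminal r a)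
    (hab : ReflTransGen r a b) : b = a := by
  induction hab with
  | refl => rfl
  | tail _ hbc ih =>
    subst ih
    exact ha _ hbc

theorem eqvGen_swap : EqvGen (Function.swap r) = EqvGen r :=
  Subrelation.antisymm
    (EqvGen.eqvGen_le fun _ _ h => .symm _ _ (.rel _ _ h))
    (EqvGen.eqvGen_le fun _ _ h => .symm _ _ (.rel _ _ h))

theorem existsUnique_maximal_in_eqvGen_class (f : α → α) (hle : ∀ a, ReflTransGen r a (f a))
    (hstep : ∀ a b, r a b → f a = f b) (hterminal : ∀ a, IsTerminal r (f a))
    (hfix : ∀ a, IsTerminal r a → f a = a) (a : α) :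
    ∃! m, EqvGen r a m ∧ ∀ u, EqvGen r a u → ReflTransGen r m u → u = m := by
  refine ⟨f a, ⟨EqvGen.reflTransGen_le_eqvGen _ _ _ (hle a),
    fun u _ h => (hterminal a).eq_of_reflTransGen h⟩, ?_⟩
  rintro m ⟨ham, hmax⟩
  have hm : IsTerminal r m := fun u hu => hmax u (.trans _ _ _ ham (.rel _ _ hu)) (.single hu)
  calc m = f m := (hfix m hm).symm
    _ = f a := ((Setoid.ker f).iseqv.eqvGen_iff.mp (EqvGen.mono hstep _ _ ham)).symm

end Relation

namespace MTerm

open Relation Function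

theorem mle_app {a a' b b' : MTerm} (ha : MLe a a') (hb : MLe b b') :
    MLe (app a b) (app a' b') :=
  (ha.lift (app · b) fun _ _ => MStep.left b).trans (hb.lift (app a') fun _ _ => MStep.right a')

open Classical in
noncomputable def maxForm : MTerm → MTerm
  | M => M
  | var n => var n
  | app a b => if maxForm a = M ∧ maxForm b ≠ M then app (maxForm b) (maxForm b)
      else app (maxForm a) (maxForm b)

open Classical in
noncomputable def minForm : MTerm → MTerm
  | M => M
  | var n => var n
  | app a b => if minForm a = minForm b ∧ minForm a ≠ M then app M (minForm a)
      else app (minForm a) (minForm b)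

theorem mle_maxForm (t : MTerm) : MLe t (maxForm t) := by
  induction t with
  | M | var _ => exact .refl
  | app a b iha ihb =>
    rw [maxForm]
    split_ifs with h
    · have hle := mle_app iha ihb
      rw [h.1] at hle
      exact hle.tail (.mock _)
    · exact mle_app iha ihb

theorem minForm_mle (t : MTerm) : MLe (minForm t) t := by
  induction t with
  | M | var _ => exact .refl
  | app a b iha ihb =>
    rw [minForm]
    split_ifs with h
    · exact .head (MStep.mock _) (mle_app iha (h.1 ▸ ihb))
    · exact mle_app iha ihb

theorem maxForm_eq_of_step {t u : MTerm} (h : MStep t u) : maxForm t = maxForm u := by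
  induction h with
  | mock s => by_cases hs : maxForm s = M <;> simp [maxForm, hs]
  | left _ _ ih | right _ _ ih => rw [maxForm, maxForm, ih]

theorem minForm_eq_of_step {t u : MTerm} (h : MStep t u) : minForm t = minForm u := by
  induction h with
  | mock s => by_cases hs : minForm s = M <;> simp [minForm, hs]
  | left _ _ ih | right _ _ ih => rw [minForm, minForm, ih]

theorem isTerminal_M : IsTerminal MStep M := fun _ h => nomatch h

theorem isTerminal_var (n : ℕ) : IsTerminal MStep (var n) := fun _ h => nomatch h

theorem isTerminal_app_iff {a b : MTerm} :
    IsTerminal MStep (app a b) ↔ IsTerminal MStep a ∧ IsTerminal MStep b ∧ (a = M → b = M) := by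
  constructor
  · intro h
    refine ⟨fun u hu => ?_, fun u hu => ?_, ?_⟩
    · injection h _ (.left b hu)
    · injection h _ (.right a hu)
    · rintro rfl
      injection h _ (.mock b)
  · rintro ⟨ha, hb, hM⟩ u h
    cases h with
    | mock => rw [hM rfl]
    | left _ h => rw [ha _ h]
    | right _ h => rw [hb _ h]

theorem isTerminal_swap_M : IsTerminal (swap MStep) M := fun _ h => nomatch h

theorem isTerminal_swap_var (n : ℕ) : IsTerminal (swap MStep) (var n) := fun _ h => nomatch h

theorem isTerminal_swap_app_iff {a b : MTerm} :
    IsTerminal (swap MStep) (app a b) ↔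
      IsTerminal (swap MStep) a ∧ IsTerminal (swap MStep) b ∧ (a = b → a = M) := by
  constructor
  · intro h
    refine ⟨fun u hu => ?_, fun u hu => ?_, ?_⟩
    · injection h _ (.left b hu)
    · injection h _ (.right a hu)
    · rintro rfl
      injection h _ (.mock a) with h
      exact h.symm
  · rintro ⟨ha, hb, hsq⟩ u h
    cases h with
    | mock => rw [hsq rfl]
    | left _ h => rw [ha _ h]
    | right _ h => rw [hb _ h]

theorem isTerminal_maxForm (t : MTerm) : IsTerminal MStep (maxForm t) := by
  induction t with
  | M => exact isTerminal_M
  | var n => exact isTerminal_var n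
  | app a b iha ihb =>
    rw [maxForm]
    split_ifs with h
    · exact isTerminal_app_iff.mpr ⟨ihb, ihb, fun hM => absurd hM h.2⟩
    · exact isTerminal_app_iff.mpr ⟨iha, ihb, fun hM => by_contra fun hb => h ⟨hM, hb⟩⟩

theorem isTerminal_swap_minForm (t : MTerm) : IsTerminal (swap MStep) (minForm t) := by
  induction t with
  | M => exact isTerminal_swap_M
  | var n => exact isTerminal_swap_var n
  | app a b iha ihb =>
    rw [minForm]
    split_ifs with h
    · exact isTerminal_swap_app_iff.mpr ⟨isTerminal_swap_M, iha, fun _ => rfl⟩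
    · exact isTerminal_swap_app_iff.mpr ⟨iha, ihb, fun he => by_contra fun hM => h ⟨he, hM⟩⟩

theorem maxForm_eq_self_of_isTerminal {t : MTerm} (h : IsTerminal MStep t) : maxForm t = t := by
  induction t with
  | M | var _ => rfl
  | app a b iha ihb =>
    obtain ⟨ha, hb, hM⟩ := isTerminal_app_iff.mp h
    rw [maxForm, iha ha, ihb hb, if_neg fun h => h.2 (hM h.1)]

theorem minForm_eq_self_of_isTerminal_swap {t : MTerm} (h : IsTerminal (swap MStep) t) :
    minForm t = t := by
  induction t with
  | M | var _ => rfl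
  | app a b iha ihb =>
    obtain ⟨ha, hb, hsq⟩ := isTerminal_swap_app_iff.mp h
    rw [minForm, iha ha, ihb hb, if_neg fun h => h.2 (hsq h.1)]

end MTerm

open Relation MTerm

/-- In the Mockingbird rewrite poset, each equivalence class under the rewrite
equivalence has a unique minimal element and a unique maximal element. -/
theorem unique_min_max (t : MTerm) :
    (∃! m : MTerm, Relation.EqvGen MStep t m ∧
      ∀ u : MTerm, Relation.EqvGen MStep t u → MLe u m → u = m) ∧
    (∃! m : MTerm, Relation.EqvGen MStep t m ∧
      ∀ u : MTerm, Relation.EqvGen MStep t u → MLe m u → u = m) := by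
  have hmin := existsUnique_maximal_in_eqvGen_class (r := Function.swap MStep) minForm
    (fun a => reflTransGen_swap.mpr (minForm_mle a)) (fun _ _ h => (minForm_eq_of_step h).symm)
    isTerminal_swap_minForm (fun _ => minForm_eq_self_of_isTerminal_swap) t
  simp only [eqvGen_swap, reflTransGen_swap] at hmin
  exact ⟨hmin, existsUnique_maximal_in_eqvGen_class maxForm mle_maxForm
    (fun _ _ => maxForm_eq_of_step) isTerminal_maxForm (fun _ => maxForm_eq_self_of_isTerminal) t⟩
end
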